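/- Let I be an MA 2 instance that admits at least one MA 2-feasible hub set. For a task t = (b,b') ∈ τ, call a pair (h,h') ∈ H × H valid for t if (b,h) ∈ E_BH, (h,h') ∈ E_HH and (b',h') ∈ E_BH, and let m(t) be the minimum of cost({h,h'}) over pairs valid for t. Then the union over t ∈ τ of pairs attaining m(t) is an MA 2-feasible set S with cost(S) ≤ Σ_{t∈τ} m(t) ≤ |τ| · OPT ≤ |B|² · OPT. -/

import Mathlib

/-!
Opening a cheapest valid pair for every task is feasible, and by subadditivity of the cost
it costs at most `∑ m t`. Conversely, an optimal set contains a valid pair for each task,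
so `m t ≤ OPT` for every `t`; finally `|τ| ≤ |B × B| = |B|²`.
-/

/-- A hub set `S` is MA 2-feasible if every task can be routed along existing edges
through one or two open hubs. -/
def MA2Feasible {B H : Type*} (EBH : Set (B × H)) (EHH : Set (H × H))
    (τ : Finset (B × B)) (S : Finset H) : Prop :=
  ∀ t ∈ τ, ∃ h ∈ S, ∃ h' ∈ S, (t.1, h) ∈ EBH ∧ (h, h') ∈ EHH ∧ (t.2, h') ∈ EBH

/-- Total opening cost of a hub set. -/
def cost {H : Type*} (c : H → ℝ) (S : Finset H) : ℝ := ∑ h ∈ S, c h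

section

variable {B H : Type*} {c : H → ℝ}

lemma cost_nonneg (hc : ∀ h, 0 ≤ c h) (S : Finset H) : 0 ≤ cost c S :=
  Finset.sum_nonneg fun h _ => hc h

lemma cost_mono (hc : ∀ h, 0 ≤ c h) {S T : Finset H} (hST : S ⊆ T) : cost c S ≤ cost c T :=
  Finset.sum_le_sum_of_subset_of_nonneg hST fun h _ _ => hc h

lemma cost_union_le [DecidableEq H] (hc : ∀ h, 0 ≤ c h) (S T : Finset H) :
    cost c (S ∪ T) ≤ cost c S + cost c T := by
  rw [cost, cost, cost, ← Finset.sum_union_inter]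
  exact le_add_of_nonneg_right (Finset.sum_nonneg fun h _ => hc h)

lemma cost_biUnion_le [DecidableEq H] {ι : Type*} (hc : ∀ h, 0 ≤ c h) (s : Finset ι)
    (g : ι → Finset H) :
    cost c (s.biUnion g) ≤ ∑ i ∈ s, cost c (g i) := by
  classical
  induction s using Finset.induction_on with
  | empty => simp [cost]
  | insert i s hi ih =>
    rw [Finset.biUnion_insert, Finset.sum_insert hi]
    exact (cost_union_le hc _ _).trans (by gcongr)

lemma MA2Feasible.biUnion_pair [DecidableEq H] {EBH : Set (B × H)} {EHH : Set (H × H)}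
    {τ : Finset (B × B)} {p : B × B → H × H}
    (hp : ∀ t ∈ τ, (t.1, (p t).1) ∈ EBH ∧ ((p t).1, (p t).2) ∈ EHH ∧ (t.2, (p t).2) ∈ EBH) :
    MA2Feasible EBH EHH τ (τ.biUnion fun t => {(p t).1, (p t).2}) := fun t ht =>
  ⟨(p t).1, Finset.mem_biUnion.2 ⟨t, ht, by simp⟩,
    (p t).2, Finset.mem_biUnion.2 ⟨t, ht, by simp⟩, hp t ht⟩

lemma MA2Feasible.le_cost [DecidableEq H] {EBH : Set (B × H)} {EHH : Set (H × H)}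
    {τ : Finset (B × B)} {S : Finset H} (hS : MA2Feasible EBH EHH τ S) (hc : ∀ h, 0 ≤ c h)
    {t : B × B} (ht : t ∈ τ)
    {m : ℝ} (hm : IsLeast {x : ℝ | ∃ h h' : H,
        ((t.1, h) ∈ EBH ∧ (h, h') ∈ EHH ∧ (t.2, h') ∈ EBH) ∧ x = cost c {h, h'}} m) :
    m ≤ cost c S := by
  obtain ⟨h, hh, h', hh', hvalid⟩ := hS t ht
  calc m ≤ cost c {h, h'} := hm.2 ⟨h, h', hvalid, rfl⟩
    _ ≤ cost c S := cost_mono hc (Finset.insert_subset hh (Finset.singleton_subset_iff.2 hh'))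

lemma card_le_card_sq [Fintype B] (τ : Finset (B × B)) :
    (τ.card : ℝ) ≤ (Fintype.card B : ℝ) ^ 2 := by
  have := τ.card_le_univ
  rw [Fintype.card_prod, ← sq] at this
  exact_mod_cast this

end

theorem stmt2_general {B H : Type*} [Fintype B] [DecidableEq H]
    (c : H → ℝ) (hc : ∀ h, 0 ≤ c h)
    (EBH : Set (B × H)) (EHH : Set (H × H))
    (τ : Finset (B × B))
    (m : B × B → ℝ)
    (hm : ∀ t ∈ τ, IsLeast
      {x : ℝ | ∃ h h' : H,
        ((t.1, h) ∈ EBH ∧ (h, h') ∈ EHH ∧ (t.2, h') ∈ EBH) ∧ x = cost c {h, h'}} (m t))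
    (p : B × B → H × H)
    (hpvalid : ∀ t ∈ τ,
      (t.1, (p t).1) ∈ EBH ∧ ((p t).1, (p t).2) ∈ EHH ∧ (t.2, (p t).2) ∈ EBH)
    (hpmin : ∀ t ∈ τ, cost c {(p t).1, (p t).2} = m t)
    (OPT : ℝ)
    (hOPT : IsLeast {x : ℝ | ∃ S : Finset H, MA2Feasible EBH EHH τ S ∧ x = cost c S} OPT) :
    MA2Feasible EBH EHH τ (τ.biUnion fun t => {(p t).1, (p t).2}) ∧
      cost c (τ.biUnion fun t => {(p t).1, (p t).2}) ≤ ∑ t ∈ τ, m t ∧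
      ∑ t ∈ τ, m t ≤ (τ.card : ℝ) * OPT ∧
      (τ.card : ℝ) * OPT ≤ ((Fintype.card B : ℝ)) ^ 2 * OPT := by
  obtain ⟨S, hS, rfl⟩ := hOPT.1
  refine ⟨MA2Feasible.biUnion_pair hpvalid, ?_, ?_, ?_⟩
  · calc cost c (τ.biUnion fun t => {(p t).1, (p t).2})
        ≤ ∑ t ∈ τ, cost c {(p t).1, (p t).2} := cost_biUnion_le hc τ _
      _ = ∑ t ∈ τ, m t := Finset.sum_congr rfl hpmin
  · rw [← nsmul_eq_mul]
    exact Finset.sum_le_card_nsmul τ m _ fun t ht => hS.le_cost hc ht (hm t ht)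
  · exact mul_le_mul_of_nonneg_right (card_le_card_sq τ) (cost_nonneg hc S)

theorem stmt2 {B H : Type*} [Fintype B] [Fintype H] [DecidableEq H]
    (c : H → ℝ) (hc : ∀ h, 0 ≤ c h)
    (EBH : Set (B × H)) (EHH : Set (H × H))
    (hEHHsym : ∀ h h', (h, h') ∈ EHH → (h', h) ∈ EHH)
    (hEHHloop : ∀ h, (h, h) ∈ EHH)
    (τ : Finset (B × B))
    (hfeas : ∃ S : Finset H, MA2Feasible EBH EHH τ S)
    (m : B × B → ℝ)
    (hm : ∀ t ∈ τ, IsLeast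
      {x : ℝ | ∃ h h' : H,
        ((t.1, h) ∈ EBH ∧ (h, h') ∈ EHH ∧ (t.2, h') ∈ EBH) ∧ x = cost c {h, h'}} (m t))
    (p : B × B → H × H)
    (hpvalid : ∀ t ∈ τ,
      (t.1, (p t).1) ∈ EBH ∧ ((p t).1, (p t).2) ∈ EHH ∧ (t.2, (p t).2) ∈ EBH)
    (hpmin : ∀ t ∈ τ, cost c {(p t).1, (p t).2} = m t)
    (OPT : ℝ)
    (hOPT : IsLeast {x : ℝ | ∃ S : Finset H, MA2Feasible EBH EHH τ S ∧ x = cost c S} OPT) :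
    MA2Feasible EBH EHH τ (τ.biUnion fun t => {(p t).1, (p t).2}) ∧
      cost c (τ.biUnion fun t => {(p t).1, (p t).2}) ≤ ∑ t ∈ τ, m t ∧
      ∑ t ∈ τ, m t ≤ (τ.card : ℝ) * OPT ∧
      (τ.card : ℝ) * OPT ≤ ((Fintype.card B : ℝ)) ^ 2 * OPT :=
  stmt2_general c hc EBH EHH τ m hm p hpvalid hpmin OPT hOPT
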